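/- arXiv:1310.5261 — 2 statements merged into one kernel-verified Lean document; each statement's English description precedes it below -/
import Mathlib

section
/- Let K be a field, f ∈ K[x] a monic irreducible polynomial, and X ∈ Mat_n(K) a matrix whose minimal polynomial over K is a power of f. Let r ∈ K[x] be such that the minimal polynomial of r(X) over K is also a power of f and such that r(X) is not similar to X. Then X admits a Jordan–Chevalley decomposition over K: there exist S, N ∈ Mat_n(K) with X = S + N, S·N = N·S, N nilpotent, and S semisimple (that is, the minimal polynomial of S over K is squarefree). -/
/-- Two square matrices are similar if they are conjugate by an invertible matrix. -/
def Matrix.Similar {K : Type*} [Field K] {n : ℕ} (A B : Matrix (Fin n) (Fin n) K) : Prop :=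
  ∃ g : (Matrix (Fin n) (Fin n) K)ˣ,
    (↑g⁻¹ : Matrix (Fin n) (Fin n) K) * A * (↑g : Matrix (Fin n) (Fin n) K) = B

/-!
Write `L = K[x] ⧸ (f)`. Substitution `p ↦ p ∘ r` is well defined on `K[x] ⧸ (f ^ e)` because
`f ∣ f ∘ r` (the minimal polynomial `f ^ m` of `X` divides `(f ∘ r) ^ k`), and it is an
automorphism of the field `L`. Write `f ∘ r = f * w`.

If `f ∤ w`, substitution by `r` preserves the `f`-adic order, so it is an automorphism of every
`K[x] ⧸ (f ^ e)` carrying the action of `x` to that of `r`. Since `K^n`, as a `K[x]`-module via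
`X`, is a direct sum of such modules, this makes `r(X)` similar to `X`, which is excluded.

So `f ^ 2 ∣ f ∘ r`. Inverting the automorphism of `L` gives `u` with `t := u ∘ r ≡ x` mod `f`
and `f ^ 2 ∣ f ∘ t`. Since `f ∘ (t ∘ s) = (f ∘ t) ∘ s`, the `f`-adic order of `f ∘ s` doubles
when `s` is replaced by `t ∘ s`, so iterating yields `s ≡ x` mod `f` with `f ^ m ∣ f ∘ s`.
Then `S = s(X)` is killed by the squarefree `f` and `N = X - s(X)` by `(x - s) ^ m`.
-/

open Polynomial

namespace Polynomial

section CommRing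

variable {R : Type*} [CommRing R]

theorem sub_dvd_comp_sub_comp (p a b : R[X]) : a - b ∣ p.comp a - p.comp b := by
  have h := sub_dvd_eval_sub a b (p.map C)
  rwa [eval_map, eval_map] at h

theorem pow_dvd_pow_comp_of_dvd_comp {g r : R[X]} (h : g ∣ g.comp r) (e : ℕ) :
    g ^ e ∣ (g ^ e).comp r := by
  rw [pow_comp]
  exact pow_dvd_pow_of_dvd h e

theorem span_singleton_le_comap_aeval {g r : R[X]} (h : g ∣ g.comp r) :
    Ideal.span {g} ≤ (Ideal.span {g}).comap (aeval r) := by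
  rwa [Ideal.span_le, Set.singleton_subset_iff, SetLike.mem_coe, Ideal.mem_comap,
    Ideal.mem_span_singleton, ← comp_eq_aeval]

noncomputable def quotientCompMap (g r : R[X]) (h : g ∣ g.comp r) :
    R[X] ⧸ Ideal.span {g} →ₐ[R] R[X] ⧸ Ideal.span {g} :=
  Ideal.quotientMapₐ _ (aeval r) (span_singleton_le_comap_aeval h)

theorem quotientCompMap_mk {g r : R[X]} (h : g ∣ g.comp r) (p : R[X]) :
    quotientCompMap g r h (Ideal.Quotient.mk _ p) = Ideal.Quotient.mk _ (p.comp r) :=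
  rfl

theorem exists_dvd_sub_X_and_pow_dvd_comp {f t : R[X]} (ht : f ∣ t - X)
    (hft : f ^ 2 ∣ f.comp t) (j : ℕ) : ∃ s : R[X], f ∣ s - X ∧ f ^ (j + 1) ∣ f.comp s := by
  induction j with
  | zero => exact ⟨X, by simp, by simp⟩
  | succ j ih =>
    obtain ⟨s, hs, hfs⟩ := ih
    obtain ⟨c, hc⟩ := hft
    refine ⟨t.comp s, ?_, ?_⟩
    · have h := dvd_add (hs.trans (sub_dvd_comp_sub_comp t s X)) ht
      rwa [comp_X, sub_add_sub_cancel] at h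
    · rw [← comp_assoc, hc, mul_comp, pow_comp]
      refine Dvd.dvd.mul_right ?_ _
      calc f ^ (j + 1 + 1) ∣ f ^ ((j + 1) * 2) := pow_dvd_pow f (by omega)
        _ = (f ^ (j + 1)) ^ 2 := pow_mul f (j + 1) 2
        _ ∣ (f.comp s) ^ 2 := pow_dvd_pow_of_dvd hfs 2

end CommRing

section Field

variable {K : Type*} [Field K] {f r w : K[X]}

theorem bijective_quotientCompMap_of_injective {g : K[X]} (hg : g ≠ 0) (h : g ∣ g.comp r)
    (hinj : Function.Injective (quotientCompMap g r h)) :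
    Function.Bijective (quotientCompMap g r h) :=
  have : Module.Finite K (K[X] ⧸ Ideal.span {g}) := (AdjoinRoot.powerBasis hg).finite
  ⟨hinj, (LinearMap.injective_iff_surjective (f := (quotientCompMap g r h).toLinearMap)).mp hinj⟩

theorem bijective_quotientCompMap_of_irreducible (hirr : Irreducible f) (h : f ∣ f.comp r) :
    Function.Bijective (quotientCompMap f r h) :=
  have := PrincipalIdealRing.isMaximal_of_irreducible hirr
  letI := Ideal.Quotient.field (Ideal.span {f})
  bijective_quotientCompMap_of_injective hirr.ne_zero h (quotientCompMap f r h).toRingHom.injective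

theorem dvd_of_dvd_comp (hirr : Irreducible f) (hfr : f ∣ f.comp r) {q : K[X]}
    (hq : f ∣ q.comp r) : f ∣ q := by
  rw [← Ideal.mem_span_singleton, ← Ideal.Quotient.eq_zero_iff_mem] at hq ⊢
  apply (bijective_quotientCompMap_of_irreducible hirr hfr).injective
  rwa [quotientCompMap_mk, map_zero]

theorem exists_dvd_comp_sub_X (hirr : Irreducible f) (hfr : f ∣ f.comp r) :
    ∃ u : K[X], f ∣ u.comp r - X ∧ f ∣ f.comp u := by
  let σ := AlgEquiv.ofBijective _ (bijective_quotientCompMap_of_irreducible hirr hfr)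
  obtain ⟨u, hu⟩ := Ideal.Quotient.mk_surjective (σ.symm (Ideal.Quotient.mk _ X))
  refine ⟨u, ?_, ?_⟩
  · rw [← Ideal.mem_span_singleton, ← Ideal.Quotient.eq, ← quotientCompMap_mk hfr, hu]
    exact σ.apply_symm_apply _
  · rw [← Ideal.mem_span_singleton, ← Ideal.Quotient.eq_zero_iff_mem]
    calc Ideal.Quotient.mk _ (f.comp u) = aeval (Ideal.Quotient.mk (Ideal.span {f}) u) f := by
          rw [comp_eq_aeval, ← Ideal.Quotient.mkₐ_eq_mk K, aeval_algHom_apply]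
      _ = σ.symm (aeval (Ideal.Quotient.mk (Ideal.span {f}) X) f) := by
          rw [hu]; exact aeval_algHom_apply σ.symm.toAlgHom _ _
      _ = σ.symm (Ideal.Quotient.mk _ f) := by
          rw [← Ideal.Quotient.mkₐ_eq_mk K, aeval_algHom_apply, aeval_X_left_apply]
      _ = 0 := by simp

theorem pow_dvd_of_pow_dvd_comp (hirr : Irreducible f) (hw : f.comp r = f * w)
    (hnw : ¬ f ∣ w) {e : ℕ} {q : K[X]} (hq : f ^ e ∣ q.comp r) : f ^ e ∣ q := by
  induction e generalizing q with
  | zero => exact one_dvd q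
  | succ e ih =>
    obtain ⟨q, rfl⟩ := dvd_of_dvd_comp hirr ⟨w, hw⟩ ((dvd_pow_self f e.succ_ne_zero).trans hq)
    rw [mul_comp, hw, pow_succ', mul_assoc, mul_dvd_mul_iff_left hirr.ne_zero] at hq
    have hcop : IsCoprime (f ^ e) w := ((hirr.coprime_iff_not_dvd).mpr hnw).pow_left
    rw [pow_succ']
    exact mul_dvd_mul_left f (ih (hcop.dvd_of_dvd_mul_left hq))

theorem exists_linearEquiv_X_smul_of_comp_eq_mul (hirr : Irreducible f) (hw : f.comp r = f * w)
    (hnw : ¬ f ∣ w) (e : ℕ) :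
    ∃ τ : (K[X] ⧸ K[X] ∙ f ^ e) ≃ₗ[K] (K[X] ⧸ K[X] ∙ f ^ e),
      ∀ b, τ ((X : K[X]) • b) = r • τ b := by
  have h := pow_dvd_pow_comp_of_dvd_comp ⟨w, hw⟩ e
  have hinj : Function.Injective (quotientCompMap _ r h) := by
    refine (injective_iff_map_eq_zero _).mpr fun b hb => ?_
    obtain ⟨q, rfl⟩ := Ideal.Quotient.mk_surjective b
    rw [quotientCompMap_mk, Ideal.Quotient.eq_zero_iff_mem, Ideal.mem_span_singleton] at hb
    rw [Ideal.Quotient.eq_zero_iff_mem, Ideal.mem_span_singleton]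
    exact pow_dvd_of_pow_dvd_comp hirr hw hnw hb
  let σ := AlgEquiv.ofBijective _
    (bijective_quotientCompMap_of_injective (pow_ne_zero e hirr.ne_zero) h hinj)
  refine ⟨σ.toLinearEquiv, fun b => ?_⟩
  -- `K[X] ⧸ K[X] ∙ g` is the quotient ring, on which `p • b` is `mk p * b`
  change σ (Ideal.Quotient.mk (Ideal.span {f ^ e}) X * b)
    = Ideal.Quotient.mk (Ideal.span {f ^ e}) r * σ b
  rw [map_mul, AlgEquiv.ofBijective_apply, quotientCompMap_mk, X_comp]

end Field

end Polynomial

section JordanChevalley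

variable {K A : Type*} [Field K] [Ring A] [Algebra K A] {f r : K[X]} {m : ℕ} {x : A}

theorem dvd_comp_of_minpoly_eq_pow (hf : Prime f) (hm : m ≠ 0) (hx : minpoly K x = f ^ m)
    {k : ℕ} (hr : minpoly K (aeval x r) = f ^ k) : f ∣ f.comp r := by
  have hdvd : f ^ m ∣ (f.comp r) ^ k := by
    rw [← hx, ← pow_comp]
    apply minpoly.dvd
    rw [aeval_comp, ← hr, minpoly.aeval]
  exact hf.dvd_of_dvd_pow ((dvd_pow_self f hm).trans hdvd)

theorem exists_jordanChevalley_of_dvd (hf : Squarefree f) (hx : aeval x (f ^ m) = 0) {s : K[X]}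
    (hs : f ∣ s - X) (hfs : f ^ m ∣ f.comp s) :
    ∃ S N : A, x = S + N ∧ Commute S N ∧ IsNilpotent N ∧ Squarefree (minpoly K S) := by
  refine ⟨aeval x s, aeval x (X - s), by simp, (Commute.all s (X - s)).map (aeval x), ⟨m, ?_⟩,
    hf.squarefree_of_dvd (minpoly.dvd K _ ?_)⟩
  · obtain ⟨c, hc⟩ := pow_dvd_pow_of_dvd (dvd_sub_comm.mp hs) m
    rw [← map_pow, hc, map_mul, hx, zero_mul]
  · obtain ⟨c, hc⟩ := hfs
    rw [← aeval_comp, hc, map_mul, hx, zero_mul]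

theorem exists_jordanChevalley_of_sq_dvd_comp (hirr : Irreducible f) (hfr : f ^ 2 ∣ f.comp r)
    (hx : aeval x (f ^ m) = 0) :
    ∃ S N : A, x = S + N ∧ Commute S N ∧ IsNilpotent N ∧ Squarefree (minpoly K S) := by
  obtain ⟨u, hu, ⟨c, hc⟩⟩ := exists_dvd_comp_sub_X hirr ((dvd_pow_self f two_ne_zero).trans hfr)
  have hft : f ^ 2 ∣ f.comp (u.comp r) := by
    rw [← comp_assoc, hc, mul_comp]
    exact hfr.mul_right _
  obtain ⟨s, hs, hfs⟩ := exists_dvd_sub_X_and_pow_dvd_comp hu hft m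
  exact exists_jordanChevalley_of_dvd hirr.squarefree hx hs ((pow_dvd_pow f m.le_succ).trans hfs)

end JordanChevalley

namespace Matrix

variable {K : Type*} [Field K] {n : ℕ}

theorem similar_of_linearEquiv {A B : Matrix (Fin n) (Fin n) K}
    (e : (Fin n → K) ≃ₗ[K] (Fin n → K)) (h : ∀ v, e (A *ᵥ v) = B *ᵥ e v) : B.Similar A := by
  let g := GeneralLinearGroup.toLin.symm (.ofLinearEquiv e)
  have hg : (g : Matrix (Fin n) (Fin n) K) = LinearMap.toMatrix' e := rfl
  refine ⟨g, ?_⟩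
  rw [mul_assoc, Units.inv_mul_eq_iff_eq_mul, hg]
  refine toLin'.injective <| LinearMap.ext fun v => ?_
  simp [h]

theorem similar_aeval_of_linearEquiv {A : Matrix (Fin n) (Fin n) K} {r : K[X]}
    (Φ : Module.AEval' (toLinAlgEquiv' A) ≃ₗ[K] Module.AEval' (toLinAlgEquiv' A))
    (hΦ : ∀ x, Φ ((X : K[X]) • x) = r • Φ x) : (aeval A r).Similar A := by
  refine similar_of_linearEquiv
    ((Module.AEval'.of _).trans (Φ.trans (Module.AEval'.of _).symm)) fun v => ?_
  simp only [LinearEquiv.trans_apply, ← toLinAlgEquiv'_apply, ← Module.AEval'.X_smul_of, hΦ]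
  rw [Module.AEval.of_symm_smul, aeval_algEquiv]
  rfl

theorem similar_aeval_of_comp_eq_mul {A : Matrix (Fin n) (Fin n) K} {f r w : K[X]} {m : ℕ}
    (hirr : Irreducible f) (hA : aeval A (f ^ m) = 0) (hw : f.comp r = f * w) (hnw : ¬ f ∣ w) :
    (aeval A r).Similar A := by
  have htors : Module.IsTorsion' (Module.AEval' (toLinAlgEquiv' A)) (Submonoid.powers f) := by
    refine (Submodule.isTorsion'_powers_iff f).mpr fun x => ⟨m, ?_⟩
    rw [← (Module.AEval'.of _).symm.map_eq_zero_iff, Module.AEval.of_symm_smul, aeval_algEquiv,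
      AlgHom.comp_apply, hA, map_zero, zero_smul]
  obtain ⟨d, e, ⟨E⟩⟩ := Module.torsion_by_prime_power_decomposition hirr htors
  choose τ hτ using fun i => exists_linearEquiv_X_smul_of_comp_eq_mul hirr hw hnw (e i)
  let Ψ := DFinsupp.mapRange.linearEquiv τ
  have hΨ : ∀ y, Ψ ((X : K[X]) • y) = r • Ψ y := fun y => DFinsupp.ext fun i => hτ i (y i)
  refine similar_aeval_of_linearEquiv
    ((E.restrictScalars K).trans (Ψ.trans (E.restrictScalars K).symm)) fun x => ?_
  simp only [LinearEquiv.trans_apply, LinearEquiv.restrictScalars_apply, map_smul, hΨ]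
  exact E.symm.map_smul r _

end Matrix

theorem jordan_chevalley_of_not_similar_general
    (K : Type*) [Field K] (n : ℕ) (X : Matrix (Fin n) (Fin n) K)
    (f : Polynomial K) (hirr : Irreducible f)
    (hX : ∃ m : ℕ, minpoly K X = f ^ m)
    (r : Polynomial K)
    (hr : ∃ m : ℕ, minpoly K (Polynomial.aeval X r) = f ^ m)
    (hns : ¬ (Polynomial.aeval X r).Similar X) :
    ∃ S N : Matrix (Fin n) (Fin n) K,
      X = S + N ∧ S * N = N * S ∧ IsNilpotent N ∧ Squarefree (minpoly K S) := by
  obtain ⟨m, hm⟩ := hX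
  obtain ⟨k, hk⟩ := hr
  obtain rfl | hm0 := eq_or_ne m 0
  · exact ⟨X, 0, (add_zero X).symm, by simp, IsNilpotent.zero, by simp [hm]⟩
  have hX0 : aeval X (f ^ m) = 0 := hm ▸ minpoly.aeval K X
  obtain ⟨w, hw⟩ := dvd_comp_of_minpoly_eq_pow hirr.prime hm0 hm hk
  by_cases hfw : f ∣ w
  · have hfr : f ^ 2 ∣ f.comp r := by
      rw [hw, sq]
      exact mul_dvd_mul_left f hfw
    exact exists_jordanChevalley_of_sq_dvd_comp hirr hfr hX0
  · exact (hns (Matrix.similar_aeval_of_comp_eq_mul hirr hX0 hw hfw)).elim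

/-- Let `X` be a matrix whose minimal polynomial is a power of the monic irreducible
polynomial `f`, and let `r` be a polynomial such that the minimal polynomial of `r(X)` is
also a power of `f`, and `r(X)` is not similar to `X`. Then `X` has a Jordan–Chevalley
decomposition `X = S + N` with `S` semisimple (squarefree minimal polynomial),
`N` nilpotent and `S`, `N` commuting. -/
theorem jordan_chevalley_of_not_similar
    (K : Type*) [Field K] (n : ℕ) (X : Matrix (Fin n) (Fin n) K)
    (f : Polynomial K) (hmonic : f.Monic) (hirr : Irreducible f)
    (hX : ∃ m : ℕ, minpoly K X = f ^ m)
    (r : Polynomial K)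
    (hr : ∃ m : ℕ, minpoly K (Polynomial.aeval X r) = f ^ m)
    (hns : ¬ (Polynomial.aeval X r).Similar X) :
    ∃ S N : Matrix (Fin n) (Fin n) K,
      X = S + N ∧ S * N = N * S ∧ IsNilpotent N ∧ Squarefree (minpoly K S) :=
  jordan_chevalley_of_not_similar_general K n X f hirr hX r hr hns
end

section
/- Let K be a field of prime characteristic p, f ∈ K[x] a monic irreducible polynomial, and L a splitting field of f over K in which f factors as ∏_{j=1}^{d}(x−α_j)^{p^a} with α_1, …, α_d distinct and a ≥ 1. Let I be a finite index set, e_i positive integers, and X ∈ Mat_n(K) such that K^n as a K[x]-module via X is isomorphic to ⊕_{i∈I} K[x]/(f^{e_i}). Then L^n, as an L[x]-module with x acting as the entrywise image of X in Mat_n(L), is isomorphic to ⊕_{j=1}^{d} ⊕_{i∈I} L[x]/((x−α_j)^{p^a·e_i}). -/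
open scoped DirectSum

/-!
Extension of scalars from `K` to `L` is compatible with the `K[x]`-module structure: for an
ideal `I` of `K[x]` one has `L ⊗[K] K[x]/I ≅ L[x]/I·L[x]` compatibly with `x`, and base change
commutes with finite products. So the decomposition `K^n ≅ ⊕ᵢ K[x]/(f^{eᵢ})` yields
`L^n ≅ ⊕ᵢ L[x]/(f^{eᵢ})`. Over `L`, `f^{eᵢ} = ∏ⱼ (x - αⱼ)^{p^a eᵢ}` with pairwise coprime factors,
and the Chinese remainder theorem splits each summand.
-/

open Polynomial TensorProduct Module

noncomputable section

namespace Module.AEval'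

variable {R V W : Type*} [CommSemiring R] [AddCommMonoid V] [Module R V] [AddCommMonoid W]
  [Module R W]

def congr {φ : End R V} {ψ : End R W} (e : V ≃ₗ[R] W) (h : e ∘ₗ φ = ψ ∘ₗ e) :
    AEval' φ ≃ₗ[R[X]] AEval' ψ :=
  LinearEquiv.ofAEval _ (e.trans (AEval'.of ψ)) fun v => by
    simpa [AEval'.X_smul_of] using LinearMap.congr_fun h v

end Module.AEval'

variable (K L : Type*) [CommRing K] [CommRing L] [Algebra K L]

abbrev AEvalBaseChange (M : Type*) [AddCommMonoid M] [Module K M] [Module K[X] M]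
    [IsScalarTower K K[X] M] :=
  AEval' ((DistribSMul.toLinearMap K M (X : K[X])).baseChange L)

variable {K L}

namespace Polynomial

def tensorQuotientAlgEquiv (I : Ideal K[X]) :
    L ⊗[K] (K[X] ⧸ I) ≃ₐ[L] L[X] ⧸ I.map (mapRingHom (algebraMap K L)) :=
  (Algebra.TensorProduct.tensorQuotientEquiv L K[X] L I).trans <|
    Ideal.quotientEquivAlg _ _ (polyEquivTensor' K L).symm <| by
      change _ = (I.map (Algebra.TensorProduct.includeRight : K[X] →ₐ[K] L ⊗[K] K[X]).toRingHom).map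
        ((polyEquivTensor' K L).symm : L ⊗[K] K[X] →+* L[X])
      rw [Ideal.map_map]
      congr 1
      ext <;> simp

lemma tensorQuotientAlgEquiv_one_tmul_X (I : Ideal K[X]) :
    tensorQuotientAlgEquiv (L := L) I (1 ⊗ₜ Ideal.Quotient.mk I X) = Ideal.Quotient.mk _ X := by
  simp [tensorQuotientAlgEquiv]

lemma baseChange_smul_X_quotient_eq_mulLeft (I : Ideal K[X]) :
    (DistribSMul.toLinearMap K (K[X] ⧸ I) (X : K[X])).baseChange L =
      LinearMap.mulLeft L ((1 : L) ⊗ₜ[K] Ideal.Quotient.mk I X) := by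
  refine TensorProduct.AlgebraTensorModule.ext fun l q => ?_
  obtain ⟨p, rfl⟩ := Ideal.Quotient.mk_surjective q
  simp only [LinearMap.baseChange_tmul, DistribSMul.toLinearMap_apply, LinearMap.mulLeft_apply,
    Algebra.TensorProduct.tmul_mul_tmul, one_mul]
  rfl

end Polynomial

namespace AEvalBaseChange

variable {M N : Type*} [AddCommMonoid M] [Module K M] [Module K[X] M] [IsScalarTower K K[X] M]
  [AddCommMonoid N] [Module K N] [Module K[X] N] [IsScalarTower K K[X] N]

def congr (e : M ≃ₗ[K[X]] N) : AEvalBaseChange K L M ≃ₗ[L[X]] AEvalBaseChange K L N :=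
  AEval'.congr ((e.restrictScalars K).baseChange K L M N) <| by
    rw [LinearEquiv.coe_baseChange, ← LinearMap.baseChange_comp, ← LinearMap.baseChange_comp]
    congr 1
    ext m
    exact e.map_smul X m

def piEquiv {ι : Type*} [Fintype ι] [DecidableEq ι] (M : ι → Type*) [∀ i, AddCommMonoid (M i)]
    [∀ i, Module K (M i)] [∀ i, Module K[X] (M i)] [∀ i, IsScalarTower K K[X] (M i)] :
    AEvalBaseChange K L (∀ i, M i) ≃ₗ[L[X]] ∀ i, AEvalBaseChange K L (M i) :=
  LinearEquiv.ofAEval _ (piRight K L L M ≪≫ₗ LinearEquiv.piCongrRight fun i => AEval'.of _)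
    fun w => by
      induction w using TensorProduct.induction_on with
      | zero => simp
      | add u v hu hv => simp only [map_add, smul_add, hu, hv]
      | tmul l m =>
        funext i
        simp [AEval'.X_smul_of]

def quotientEquiv (I : Ideal K[X]) :
    AEvalBaseChange K L (K[X] ⧸ I) ≃ₗ[L[X]] L[X] ⧸ I.map (mapRingHom (algebraMap K L)) :=
  LinearEquiv.ofAEval _ (tensorQuotientAlgEquiv I).toLinearEquiv fun w => by
    change tensorQuotientAlgEquiv I
      ((DistribSMul.toLinearMap K (K[X] ⧸ I) (X : K[X])).baseChange L w) = _
    rw [baseChange_smul_X_quotient_eq_mulLeft, LinearMap.mulLeft_apply, map_mul,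
      tensorQuotientAlgEquiv_one_tmul_X]
    rfl

end AEvalBaseChange

namespace Module.AEval'

variable {V : Type*} [AddCommMonoid V] [Module K V]

def baseChangeEquiv (φ : End K V) :
    AEval' (φ.baseChange L) ≃ₗ[L[X]] AEvalBaseChange K L (AEval' φ) :=
  AEval'.congr ((AEval'.of φ).baseChange K L _ _) <| by
    rw [LinearEquiv.coe_baseChange, ← LinearMap.baseChange_comp, ← LinearMap.baseChange_comp]
    congr 1
    ext v
    simp [AEval'.X_smul_of]

def baseChangePiQuotientEquiv (φ : End K V) {ι : Type*} [Fintype ι] [DecidableEq ι]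
    {I : ι → Ideal K[X]} (e : AEval' φ ≃ₗ[K[X]] ∀ i, K[X] ⧸ I i) :
    AEval' (φ.baseChange L) ≃ₗ[L[X]] ∀ i, L[X] ⧸ (I i).map (mapRingHom (algebraMap K L)) :=
  baseChangeEquiv φ ≪≫ₗ AEvalBaseChange.congr e ≪≫ₗ AEvalBaseChange.piEquiv _ ≪≫ₗ
    LinearEquiv.piCongrRight fun i => AEvalBaseChange.quotientEquiv (I i)

end Module.AEval'

namespace Matrix

variable {ι : Type*} [Fintype ι] [DecidableEq ι]

lemma piScalarRight_comp_baseChange_mulVecLin (A : Matrix ι ι K) :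
    (piScalarRight K L L ι).toLinearMap ∘ₗ A.mulVecLin.baseChange L =
      (A.map (algebraMap K L)).mulVecLin ∘ₗ (piScalarRight K L L ι).toLinearMap := by
  refine TensorProduct.AlgebraTensorModule.ext fun l v => ?_
  funext k
  simp [mulVec, dotProduct, Algebra.smul_def, Finset.sum_mul, mul_assoc]

def aevalMapEquiv (A : Matrix ι ι K) :
    AEval' (A.map (algebraMap K L)).mulVecLin ≃ₗ[L[X]] AEval' (A.mulVecLin.baseChange L) :=
  (AEval'.congr _ (piScalarRight_comp_baseChange_mulVecLin A)).symm

end Matrix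

def Ideal.quotientInfLinearEquivPiQuotient {S ι : Type*} [CommRing S] [Finite ι]
    (J : ι → Ideal S) (hJ : Pairwise (Function.onFun IsCoprime J)) :
    (S ⧸ ⨅ i, J i) ≃ₗ[S] ∀ i, S ⧸ J i :=
  (AlgEquiv.ofRingEquiv (f := Ideal.quotientInfRingEquivPiQuotient J hJ) fun _ => rfl).toLinearEquiv

def LinearEquiv.piCommUncurry (R : Type*) [Semiring R] {ι κ : Type*} (B : ι → κ → Type*)
    [∀ i j, AddCommMonoid (B i j)] [∀ i j, Module R (B i j)] :
    (∀ j i, B i j) ≃ₗ[R] ∀ q : ι × κ, B q.1 q.2 where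
  toFun F q := F q.2 q.1
  invFun G j i := G (i, j)
  map_add' _ _ := rfl
  map_smul' _ _ := rfl

namespace Polynomial

variable {F ι : Type*} [Field F] {α : ι → F}

lemma pairwise_isCoprime_span_X_sub_C_pow (hα : Function.Injective α) (m : ℕ) :
    Pairwise (Function.onFun IsCoprime fun j => Ideal.span {(X - C (α j)) ^ m}) :=
  fun _ _ hne => by
    rw [Function.onFun, Ideal.isCoprime_span_singleton_iff]
    exact (pairwise_coprime_X_sub_C hα hne).pow

lemma map_span_pow_eq_iInf [Algebra K F] [Fintype ι] {f : K[X]} {m : ℕ}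
    (hα : Function.Injective α) (hf : f.map (algebraMap K F) = ∏ j, (X - C (α j)) ^ m) (k : ℕ) :
    (Ideal.span {f ^ k}).map (mapRingHom (algebraMap K F)) =
      ⨅ j, Ideal.span {(X - C (α j)) ^ (m * k)} := by
  rw [Ideal.iInf_span_singleton fun i j hne => (pairwise_coprime_X_sub_C hα hne).pow,
    Ideal.map_span, Set.image_singleton, map_pow, coe_mapRingHom, hf, ← Finset.prod_pow]
  simp_rw [← pow_mul]

end Polynomial

end

theorem baseChange_type_inseparable_general
    (K L : Type*) [Field K] [Field L] [Algebra K L]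
    (p : ℕ)
    (n : ℕ) (X : Matrix (Fin n) (Fin n) K)
    (f : Polynomial K)
    (d : ℕ) (α : Fin d → L) (hinj : Function.Injective α)
    (a : ℕ)
    (hfactor : f.map (algebraMap K L) =
      ∏ j : Fin d, (Polynomial.X - Polynomial.C (α j)) ^ p ^ a)
    (I : Type*) [Fintype I] [DecidableEq I] (e : I → ℕ)
    (hX : Nonempty ((Module.AEval' X.mulVecLin) ≃ₗ[Polynomial K]
      (⨁ i : I, Polynomial K ⧸ Ideal.span {f ^ e i}))) :
    Nonempty ((Module.AEval' (X.map (algebraMap K L)).mulVecLin) ≃ₗ[Polynomial L]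
      (⨁ q : Fin d × I,
        Polynomial L ⧸ Ideal.span
          {(Polynomial.X - Polynomial.C (α q.1)) ^ (p ^ a * e q.2)})) := by
  obtain ⟨E⟩ := hX
  let crt (i : I) := Submodule.quotEquivOfEq _ _ (map_span_pow_eq_iInf hinj hfactor (e i)) ≪≫ₗ
    Ideal.quotientInfLinearEquivPiQuotient _ (pairwise_isCoprime_span_X_sub_C_pow hinj _)
  exact ⟨X.aevalMapEquiv ≪≫ₗ
    AEval'.baseChangePiQuotientEquiv _ (E ≪≫ₗ DirectSum.linearEquivFunOnFintype _ _ _) ≪≫ₗ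
    LinearEquiv.piCongrRight crt ≪≫ₗ LinearEquiv.piCommUncurry _ _ ≪≫ₗ
    (DirectSum.linearEquivFunOnFintype _ _ _).symm⟩

/-- Let `K` have prime characteristic `p` and let `f` be a monic irreducible polynomial
which factors over a splitting field `L` as `∏ j, (x - α j) ^ p ^ a` with the `α j`
distinct and `a ≥ 1`. If `K^n` as a `K[x]`-module via `X` is `⨁ i, K[x]/(f ^ e i)`,
then `L^n` as an `L[x]`-module via the image of `X` is
`⨁ (j, i), L[x]/((x - α j) ^ (p ^ a * e i))`. -/
theorem baseChange_type_inseparable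
    (K L : Type*) [Field K] [Field L] [Algebra K L]
    (p : ℕ) (hp : p.Prime) [CharP K p]
    (n : ℕ) (X : Matrix (Fin n) (Fin n) K)
    (f : Polynomial K) (hmonic : f.Monic) (hirr : Irreducible f)
    [Polynomial.IsSplittingField K L f]
    (d : ℕ) (α : Fin d → L) (hinj : Function.Injective α)
    (a : ℕ) (ha : 1 ≤ a)
    (hfactor : f.map (algebraMap K L) =
      ∏ j : Fin d, (Polynomial.X - Polynomial.C (α j)) ^ p ^ a)
    (I : Type*) [Fintype I] [DecidableEq I] (e : I → ℕ) (hpos : ∀ i, 0 < e i)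
    (hX : Nonempty ((Module.AEval' X.mulVecLin) ≃ₗ[Polynomial K]
      (⨁ i : I, Polynomial K ⧸ Ideal.span {f ^ e i}))) :
    Nonempty ((Module.AEval' (X.map (algebraMap K L)).mulVecLin) ≃ₗ[Polynomial L]
      (⨁ q : Fin d × I,
        Polynomial L ⧸ Ideal.span
          {(Polynomial.X - Polynomial.C (α q.1)) ^ (p ^ a * e q.2)})) :=
  baseChange_type_inseparable_general K L p n X f d α hinj a hfactor I e hX
end
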